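/- arXiv:1911.11193 — 7 statements merged into one kernel-verified Lean document; each statement's English description precedes it below -/
import Mathlib

section
/- Let p ∈ (0,1), A ∈ (0,1), B > 1, and let k be an integer with p·Bᵏ > 1 + (1-p)·Aᵏ, i.e. ρ := (1 + (1-p)Aᵏ)/(p·Bᵏ) < 1. Consider the space 𝔉 of continuous functions ζ: (0,∞) → ℝ with ∫₀^∞ |ζ(s)|/s^{k+1} ds < ∞, with metric d(ζ₁,ζ₂) = ∫₀^∞ |ζ₁(s) - ζ₂(s)|/s^{k+1} ds. Then the operator 𝒜(ζ)(s) = (1/p)·(ζ(s/B) - (1-p)·ζ(sA/B)) maps 𝔉 to 𝔉 and satisfies d(𝒜(ζ₁), 𝒜(ζ₂)) ≤ ρ·d(ζ₁,ζ₂) for all ζ₁, ζ₂ ∈ 𝔉; in particular 𝒜 is a contraction. -/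
/-!
The substitution `t = a s` gives `∫₀^∞ f (a s) / s^(k+1) ds = a^k ∫₀^∞ f t / t^(k+1) dt` for `a > 0`.
By the triangle inequality, `|𝒜 ζ s| ≤ (|ζ (s/B)| + (1-p) |ζ (sA/B)|) / p`, and integrating against
`s^-(k+1)` gives the factor `(B⁻ᵏ + (1-p) (A/B)ᵏ) / p = ρ`. Since `𝒜` is linear, applying this to
`ζ₁ - ζ₂` yields the contraction estimate.
-/

open MeasureTheory Set

section WeightedScaling

variable (k : ℕ) {a : ℝ}

lemma comp_mul_div_pow_eq (f : ℝ → ℝ) (ha : a ≠ 0) :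
    (fun s => f (a * s) / s ^ (k + 1)) = fun s => a ^ (k + 1) * (f (a * s) / (a * s) ^ (k + 1)) := by
  funext s
  rw [mul_pow]
  field_simp

lemma integrableOn_comp_mul_div_pow {f : ℝ → ℝ}
    (hf : IntegrableOn (fun s => f s / s ^ (k + 1)) (Ioi 0)) (ha : 0 < a) :
    IntegrableOn (fun s => f (a * s) / s ^ (k + 1)) (Ioi 0) := by
  rw [comp_mul_div_pow_eq k f ha.ne']
  exact ((integrableOn_Ioi_comp_mul_left_iff (fun s => f s / s ^ (k + 1)) 0 ha).mpr
    (by rwa [mul_zero])).const_mul _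

lemma integral_Ioi_comp_mul_div_pow (f : ℝ → ℝ) (ha : 0 < a) :
    ∫ s in Ioi (0:ℝ), f (a * s) / s ^ (k + 1) = a ^ k * ∫ s in Ioi (0:ℝ), f s / s ^ (k + 1) := by
  rw [comp_mul_div_pow_eq k f ha.ne', integral_const_mul,
    integral_comp_mul_left_Ioi (fun s => f s / s ^ (k + 1)) 0 ha, mul_zero, smul_eq_mul, pow_succ]
  field_simp

end WeightedScaling

section AbsWeight

variable {k : ℕ} {f : ℝ → ℝ}

lemma abs_div_pow_eqOn_norm :
    EqOn (fun s => |f s| / s ^ (k + 1)) (fun s => ‖f s / s ^ (k + 1)‖) (Ioi 0) := fun s hs => by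
  dsimp only
  rw [Real.norm_eq_abs, abs_div, abs_of_pos (pow_pos (mem_Ioi.mp hs) _)]

lemma integrableOn_abs_div_pow (hf : IntegrableOn (fun s => f s / s ^ (k + 1)) (Ioi 0)) :
    IntegrableOn (fun s => |f s| / s ^ (k + 1)) (Ioi 0) :=
  IntegrableOn.congr_fun hf.norm abs_div_pow_eqOn_norm.symm measurableSet_Ioi

lemma integrableOn_div_pow_of_abs (hc : ContinuousOn f (Ioi 0))
    (hf : IntegrableOn (fun s => |f s| / s ^ (k + 1)) (Ioi 0)) :
    IntegrableOn (fun s => f s / s ^ (k + 1)) (Ioi 0) := by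
  have hm : AEStronglyMeasurable (fun s => f s / s ^ (k + 1)) (volume.restrict (Ioi 0)) :=
    (hc.div (continuous_pow _).continuousOn fun s hs => (pow_pos hs _).ne').aestronglyMeasurable
      measurableSet_Ioi
  rw [IntegrableOn, ← integrable_norm_iff hm]
  exact IntegrableOn.congr_fun hf abs_div_pow_eqOn_norm measurableSet_Ioi

end AbsWeight

noncomputable def rescalingOp (p A B : ℝ) (ζ : ℝ → ℝ) (s : ℝ) : ℝ :=
  (1 / p) * (ζ (s / B) - (1 - p) * ζ (s * A / B))

section RescalingOp

variable {p A B : ℝ} (k : ℕ)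

lemma rescalingOp_sub (ζ₁ ζ₂ : ℝ → ℝ) (s : ℝ) :
    rescalingOp p A B (ζ₁ - ζ₂) s = rescalingOp p A B ζ₁ s - rescalingOp p A B ζ₂ s := by
  simp only [rescalingOp, Pi.sub_apply]
  ring

lemma rescalingOp_apply (ζ : ℝ → ℝ) (s : ℝ) :
    rescalingOp p A B ζ s = (1 / p) * (ζ (B⁻¹ * s) - (1 - p) * ζ (A / B * s)) := by
  rw [rescalingOp, mul_comm s A, mul_div_right_comm, div_eq_inv_mul s B]

lemma integrableOn_rescalingOp_div_pow {ζ : ℝ → ℝ} (hA : 0 < A) (hB : 0 < B)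
    (hζ : IntegrableOn (fun s => ζ s / s ^ (k + 1)) (Ioi 0)) :
    IntegrableOn (fun s => rescalingOp p A B ζ s / s ^ (k + 1)) (Ioi 0) := by
  have h₁ := integrableOn_comp_mul_div_pow k hζ (inv_pos.mpr hB)
  have h₂ := integrableOn_comp_mul_div_pow k hζ (div_pos hA hB)
  refine IntegrableOn.congr_fun ((h₁.sub (h₂.const_mul (1 - p))).const_mul (1 / p))
    (fun s _ => ?_) measurableSet_Ioi
  simp only [Pi.sub_apply, rescalingOp_apply]
  ring

lemma integral_abs_rescalingOp_div_pow_le {ζ : ℝ → ℝ} (hp : 0 < p) (hp1 : p ≤ 1) (hA : 0 < A)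
    (hB : 0 < B) (hζ : IntegrableOn (fun s => |ζ s| / s ^ (k + 1)) (Ioi 0)) :
    ∫ s in Ioi (0:ℝ), |rescalingOp p A B ζ s| / s ^ (k + 1) ≤
      (1 + (1 - p) * A ^ k) / (p * B ^ k) * ∫ s in Ioi (0:ℝ), |ζ s| / s ^ (k + 1) := by
  set I := ∫ s in Ioi (0:ℝ), |ζ s| / s ^ (k + 1)
  have h₁ := integrableOn_comp_mul_div_pow k hζ (inv_pos.mpr hB)
  have h₂ := integrableOn_comp_mul_div_pow k hζ (div_pos hA hB)
  let g : ℝ → ℝ := fun s =>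
    (1 / p) * (|ζ (B⁻¹ * s)| / s ^ (k + 1) + (1 - p) * (|ζ (A / B * s)| / s ^ (k + 1)))
  have hg : IntegrableOn g (Ioi 0) := (h₁.add (h₂.const_mul _)).const_mul _
  have hle : ∀ s ∈ Ioi (0:ℝ), |rescalingOp p A B ζ s| / s ^ (k + 1) ≤ g s := fun s hs => by
    have hw : 0 < s ^ (k + 1) := pow_pos hs _
    have htri : |ζ (B⁻¹ * s) - (1 - p) * ζ (A / B * s)| ≤
        |ζ (B⁻¹ * s)| + (1 - p) * |ζ (A / B * s)| := by
      calc _ ≤ |ζ (B⁻¹ * s)| + |(1 - p) * ζ (A / B * s)| := abs_sub _ _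
        _ = _ := by rw [abs_mul, abs_of_nonneg (sub_nonneg.mpr hp1)]
    calc |rescalingOp p A B ζ s| / s ^ (k + 1)
        ≤ (1 / p) * (|ζ (B⁻¹ * s)| + (1 - p) * |ζ (A / B * s)|) / s ^ (k + 1) := by
          rw [rescalingOp_apply, abs_mul, abs_of_pos (one_div_pos.mpr hp)]
          gcongr
      _ = g s := by
          simp only [g]
          ring
  calc ∫ s in Ioi (0:ℝ), |rescalingOp p A B ζ s| / s ^ (k + 1)
      ≤ ∫ s in Ioi (0:ℝ), g s :=
        integral_mono_of_nonneg (ae_restrict_of_forall_mem measurableSet_Ioi fun s hs =>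
          div_nonneg (abs_nonneg _) (pow_pos (mem_Ioi.mp hs) _).le) hg
          (ae_restrict_of_forall_mem measurableSet_Ioi hle)
    _ = (1 / p) * (B⁻¹ ^ k * I + (1 - p) * ((A / B) ^ k * I)) := by
        rw [integral_const_mul, integral_add h₁ (h₂.const_mul _), integral_const_mul,
          integral_Ioi_comp_mul_div_pow k (fun s => |ζ s|) (inv_pos.mpr hB),
          integral_Ioi_comp_mul_div_pow k (fun s => |ζ s|) (div_pos hA hB)]
    _ = (1 + (1 - p) * A ^ k) / (p * B ^ k) * I := by
        rw [inv_pow, div_pow]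
        field_simp

end RescalingOp

theorem stmt_8_general (p A B ρ : ℝ) (k : ℕ) (hp : p ∈ Set.Ioo (0:ℝ) 1) (hA : A ∈ Set.Ioo (0:ℝ) 1)
    (hB : 1 < B) (hρ : ρ = (1 + (1 - p) * A ^ k) / (p * B ^ k))
    (ζ₁ ζ₂ : ℝ → ℝ) (hc₁ : ContinuousOn ζ₁ (Ioi 0)) (hc₂ : ContinuousOn ζ₂ (Ioi 0))
    (hi₁ : IntegrableOn (fun s => |ζ₁ s| / s ^ (k + 1)) (Ioi 0))
    (hi₂ : IntegrableOn (fun s => |ζ₂ s| / s ^ (k + 1)) (Ioi 0))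
    (𝒜 : (ℝ → ℝ) → ℝ → ℝ)
    (h𝒜 : ∀ ζ : ℝ → ℝ, ∀ s : ℝ, 𝒜 ζ s = (1 / p) * (ζ (s / B) - (1 - p) * ζ (s * A / B))) :
    IntegrableOn (fun s => |𝒜 ζ₁ s| / s ^ (k + 1)) (Ioi 0) ∧
    IntegrableOn (fun s => |𝒜 ζ₂ s| / s ^ (k + 1)) (Ioi 0) ∧
    (∫ s in Ioi (0:ℝ), |𝒜 ζ₁ s - 𝒜 ζ₂ s| / s ^ (k + 1)) ≤
      ρ * ∫ s in Ioi (0:ℝ), |ζ₁ s - ζ₂ s| / s ^ (k + 1) := by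
  obtain rfl : 𝒜 = rescalingOp p A B := funext fun ζ => funext (h𝒜 ζ)
  have hB0 : 0 < B := zero_lt_one.trans hB
  have hj₁ := integrableOn_div_pow_of_abs hc₁ hi₁
  have hj₂ := integrableOn_div_pow_of_abs hc₂ hi₂
  have hj : IntegrableOn (fun s => (ζ₁ - ζ₂) s / s ^ (k + 1)) (Ioi 0) :=
    IntegrableOn.congr_fun (hj₁.sub hj₂) (fun s _ => (sub_div _ _ _).symm) measurableSet_Ioi
  refine ⟨integrableOn_abs_div_pow (integrableOn_rescalingOp_div_pow k hA.1 hB0 hj₁),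
    integrableOn_abs_div_pow (integrableOn_rescalingOp_div_pow k hA.1 hB0 hj₂), ?_⟩
  simp only [← rescalingOp_sub, hρ]
  exact integral_abs_rescalingOp_div_pow_le k hp.1 hp.2.le hA.1 hB0 (integrableOn_abs_div_pow hj)

theorem stmt_8 (p A B ρ : ℝ) (k : ℕ) (hp : p ∈ Set.Ioo (0:ℝ) 1) (hA : A ∈ Set.Ioo (0:ℝ) 1)
    (hB : 1 < B) (hρ : ρ = (1 + (1 - p) * A ^ k) / (p * B ^ k)) (hρ1 : ρ < 1)
    (ζ₁ ζ₂ : ℝ → ℝ) (hc₁ : ContinuousOn ζ₁ (Ioi 0)) (hc₂ : ContinuousOn ζ₂ (Ioi 0))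
    (hi₁ : IntegrableOn (fun s => |ζ₁ s| / s ^ (k + 1)) (Ioi 0))
    (hi₂ : IntegrableOn (fun s => |ζ₂ s| / s ^ (k + 1)) (Ioi 0))
    (𝒜 : (ℝ → ℝ) → ℝ → ℝ)
    (h𝒜 : ∀ ζ : ℝ → ℝ, ∀ s : ℝ, 𝒜 ζ s = (1 / p) * (ζ (s / B) - (1 - p) * ζ (s * A / B))) :
    IntegrableOn (fun s => |𝒜 ζ₁ s| / s ^ (k + 1)) (Ioi 0) ∧
    IntegrableOn (fun s => |𝒜 ζ₂ s| / s ^ (k + 1)) (Ioi 0) ∧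
    (∫ s in Ioi (0:ℝ), |𝒜 ζ₁ s - 𝒜 ζ₂ s| / s ^ (k + 1)) ≤
      ρ * ∫ s in Ioi (0:ℝ), |ζ₁ s - ζ₂ s| / s ^ (k + 1) :=
  stmt_8_general p A B ρ k hp hA hB hρ ζ₁ ζ₂ hc₁ hc₂ hi₁ hi₂ 𝒜 h𝒜
end

section
/- Let p ∈ (0,1), A ∈ (0,1), B > 1 with ρ = (1 + (1-p)Aᵏ)/(p·Bᵏ) < 1 for some integer k. If ξ: [0,∞) → ℝ is continuous, satisfies ξ(s) = p·ξ(Bs) + (1-p)·ξ(As) for all s ≥ 0, and ∫₀^∞ |ξ(s)|/s^{k+1} ds < ∞, then ξ(s) = 0 for all s ≥ 0. -/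
open MeasureTheory Set

/-!
The weighted mass `I = ∫₀^∞ |ξ s| / s^(k+1) ds` is finite. Solving the functional equation for
`ξ s` (evaluate it at `s / B`) bounds `|ξ s|` by `p⁻¹ |ξ (s / B)| + p⁻¹ (1 - p) |ξ (A s / B)|`,
and the substitution `s ↦ c s` multiplies the weighted mass by `c^k`, so `I ≤ ρ I`.
Since `ρ < 1` this forces `I = 0`, i.e. `ξ = 0` almost everywhere, hence everywhere by continuity.
-/

section WeightedIntegral

variable {f : ℝ → ℝ} {n : ℕ} {c : ℝ}

variable (f n) in
theorem comp_mul_div_pow_succ_eq (hc : c ≠ 0) :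
    (fun s => f (c * s) / s ^ (n + 1)) =
      fun s => c ^ (n + 1) * (f (c * s) / (c * s) ^ (n + 1)) := by
  funext s
  rw [mul_pow, mul_div_assoc', mul_div_mul_left _ _ (pow_ne_zero _ hc)]

variable (f n) in
theorem integral_comp_mul_div_pow_Ioi (hc : 0 < c) :
    ∫ s in Ioi 0, f (c * s) / s ^ (n + 1) = c ^ n * ∫ s in Ioi 0, f s / s ^ (n + 1) := by
  rw [comp_mul_div_pow_succ_eq f n hc.ne', integral_const_mul,
    integral_comp_mul_left_Ioi (fun s => f s / s ^ (n + 1)) 0 hc, mul_zero, smul_eq_mul,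
    ← mul_assoc, pow_succ, mul_assoc (c ^ n), mul_inv_cancel₀ hc.ne', mul_one]

theorem MeasureTheory.IntegrableOn.comp_mul_div_pow_Ioi
    (hf : IntegrableOn (fun s => f s / s ^ (n + 1)) (Ioi 0)) (hc : 0 < c) :
    IntegrableOn (fun s => f (c * s) / s ^ (n + 1)) (Ioi 0) := by
  rw [comp_mul_div_pow_succ_eq f n hc.ne']
  refine Integrable.const_mul ?_ _
  exact (integrableOn_Ioi_comp_mul_left_iff (fun s => f s / s ^ (n + 1)) 0 hc).mpr
    (by rwa [mul_zero])

theorem integral_div_pow_le_of_le_add {a b e d : ℝ} (hb : 0 < b) (hd : 0 < d)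
    (hle : ∀ s, 0 < s → f s ≤ a * f (b * s) + e * f (d * s))
    (hf : IntegrableOn (fun s => f s / s ^ (n + 1)) (Ioi 0)) :
    ∫ s in Ioi 0, f s / s ^ (n + 1) ≤
      (a * b ^ n + e * d ^ n) * ∫ s in Ioi 0, f s / s ^ (n + 1) := by
  have hfb := (hf.comp_mul_div_pow_Ioi hb).const_mul a
  have hfd := (hf.comp_mul_div_pow_Ioi hd).const_mul e
  calc ∫ s in Ioi 0, f s / s ^ (n + 1)
      ≤ ∫ s in Ioi 0, (a * (f (b * s) / s ^ (n + 1)) + e * (f (d * s) / s ^ (n + 1))) := by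
        refine setIntegral_mono_on hf (hfb.add hfd) measurableSet_Ioi fun s hs => ?_
        rw [mul_div_assoc', mul_div_assoc', ← add_div]
        exact div_le_div_of_nonneg_right (hle s hs) (pow_pos hs _).le
    _ = (a * b ^ n + e * d ^ n) * ∫ s in Ioi 0, f s / s ^ (n + 1) := by
        rw [integral_add hfb hfd, integral_const_mul, integral_const_mul,
          integral_comp_mul_div_pow_Ioi f n hb, integral_comp_mul_div_pow_Ioi f n hd]
        ring

theorem eqOn_zero_of_integral_abs_div_pow_eq_zero {ξ : ℝ → ℝ} (hcont : ContinuousOn ξ (Ici 0))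
    (hint : IntegrableOn (fun s => |ξ s| / s ^ (n + 1)) (Ioi 0))
    (hzero : ∫ s in Ioi 0, |ξ s| / s ^ (n + 1) = 0) :
    EqOn ξ 0 (Ici 0) := by
  have hnonneg : 0 ≤ᵐ[volume.restrict (Ioi 0)] fun s => |ξ s| / s ^ (n + 1) :=
    ae_restrict_of_forall_mem measurableSet_Ioi fun s (hs : 0 < s) => by positivity
  have hae : (fun s => |ξ s| / s ^ (n + 1)) =ᵐ[volume.restrict (Ioi 0)] 0 :=
    (setIntegral_eq_zero_iff_of_nonneg_ae hnonneg hint).mp hzero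
  have hξ : ξ =ᵐ[volume.restrict (Ici 0)] 0 := by
    rw [← restrict_Ioi_eq_restrict_Ici]
    filter_upwards [hae, ae_restrict_mem measurableSet_Ioi] with s hs hpos
    simpa [(pow_pos (mem_Ioi.mp hpos) (n + 1)).ne'] using hs
  refine Measure.eqOn_of_ae_eq hξ hcont continuousOn_const ?_
  rw [interior_Ici, closure_Ioi]

end WeightedIntegral

/-- The functional equation at `s / B`, solved for `ξ s`: `ξ` is a fixed point of
`𝒜 ζ s = p⁻¹ (ζ (s / B) - (1 - p) ζ (A s / B))`. -/
theorem abs_le_of_eq_mul_add_mul {ξ : ℝ → ℝ} {p A B s : ℝ} (hp : 0 < p) (hp1 : p ≤ 1)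
    (hB : 0 < B) (heq : ∀ s : ℝ, 0 ≤ s → ξ s = p * ξ (B * s) + (1 - p) * ξ (A * s))
    (hs : 0 ≤ s) :
    |ξ s| ≤ p⁻¹ * |ξ (B⁻¹ * s)| + p⁻¹ * (1 - p) * |ξ (A / B * s)| := by
  have h := heq (B⁻¹ * s) (by positivity)
  rw [← mul_assoc, mul_inv_cancel₀ hB.ne', one_mul, ← mul_assoc, ← div_eq_mul_inv] at h
  have hξ : ξ s = p⁻¹ * (ξ (B⁻¹ * s) - (1 - p) * ξ (A / B * s)) := by
    rw [h, add_sub_cancel_right, inv_mul_cancel_left₀ hp.ne']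
  calc |ξ s| = p⁻¹ * |ξ (B⁻¹ * s) - (1 - p) * ξ (A / B * s)| := by
        rw [hξ, abs_mul, abs_of_pos (inv_pos.mpr hp)]
    _ ≤ p⁻¹ * (|ξ (B⁻¹ * s)| + (1 - p) * |ξ (A / B * s)|) := by
        gcongr
        refine (abs_sub _ _).trans_eq ?_
        rw [abs_mul, abs_of_nonneg (sub_nonneg.mpr hp1)]
    _ = p⁻¹ * |ξ (B⁻¹ * s)| + p⁻¹ * (1 - p) * |ξ (A / B * s)| := by ring

theorem stmt_9 (p A B ρ : ℝ) (k : ℕ) (hp : p ∈ Set.Ioo (0:ℝ) 1) (hA : A ∈ Set.Ioo (0:ℝ) 1)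
    (hB : 1 < B) (hρ : ρ = (1 + (1 - p) * A ^ k) / (p * B ^ k)) (hρ1 : ρ < 1)
    (ξ : ℝ → ℝ) (hcont : ContinuousOn ξ (Ici 0))
    (heq : ∀ s : ℝ, 0 ≤ s → ξ s = p * ξ (B * s) + (1 - p) * ξ (A * s))
    (hint : IntegrableOn (fun s => |ξ s| / s ^ (k + 1)) (Ioi 0)) :
    ∀ s : ℝ, 0 ≤ s → ξ s = 0 := by
  have hB0 : 0 < B := one_pos.trans hB
  have hρ' : ρ = p⁻¹ * B⁻¹ ^ k + p⁻¹ * (1 - p) * (A / B) ^ k := by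
    rw [hρ, inv_pow, div_pow]
    field_simp
  have hI_le := integral_div_pow_le_of_le_add (inv_pos.mpr hB0) (div_pos hA.1 hB0)
    (fun s hs => abs_le_of_eq_mul_add_mul hp.1 hp.2.le hB0 heq hs.le) hint
  rw [← hρ'] at hI_le
  have hI_nonneg : 0 ≤ ∫ s in Ioi 0, |ξ s| / s ^ (k + 1) :=
    setIntegral_nonneg measurableSet_Ioi fun s (hs : 0 < s) => by positivity
  have hI_zero : ∫ s in Ioi 0, |ξ s| / s ^ (k + 1) = 0 := by nlinarith
  exact eqOn_zero_of_integral_abs_div_pow_eq_zero hcont hint hI_zero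
end

section
/- Let p ∈ (0,1), q = 1-p, and suppose f: [0,∞) → (0,1] is continuous with f(0) = 1 and satisfies f((1-p)s)·((1-p) + p·f(s))·(1 - (1-q)·f(qs)) = q·f(qs) for all s ≥ 0. Then the function ξ defined by 1/f(s) = 1 + ξ(s) satisfies ξ(s) = (1/(1-p))·ξ((1-p)s) for all s ≥ 0. -/
/-!
With `q = 1 - p` the factor `f((1-p)s) > 0` cancels from the functional equation, which then
says `1 / f((1-p)s) = (1-p) / f(s) + p`. Writing `1 / f = 1 + ξ`, this is
`ξ((1-p)s) = (1-p) ξ(s)`.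
-/

theorem inv_eq_of_mul_add_mul_sub_mul_eq {p x y : ℝ} (hp : p ≠ 0) (hx : x ≠ 0) (hy : y ≠ 0)
    (h : y * ((1 - p) + p * x) * (1 - p * y) = (1 - p) * y) :
    y⁻¹ = (1 - p) * x⁻¹ + p := by
  have hcancel : p * (x - (1 - p) * y - p * x * y) = 0 := by
    apply mul_right_cancel₀ hy
    linear_combination h
  have hlin : x - (1 - p) * y - p * x * y = 0 := (mul_eq_zero.mp hcancel).resolve_left hp
  field_simp
  linear_combination hlin

theorem stmt_11_general (p q : ℝ) (hp : p ∈ Set.Ioo (0:ℝ) 1) (hq : q = 1 - p)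
    (f : ℝ → ℝ)
    (hrange : ∀ s : ℝ, 0 ≤ s → f s ∈ Set.Ioc (0:ℝ) 1)
    (heq : ∀ s : ℝ, 0 ≤ s →
      f ((1 - p) * s) * ((1 - p) + p * f s) * (1 - (1 - q) * f (q * s)) = q * f (q * s))
    (ξ : ℝ → ℝ) (hξ : ∀ s : ℝ, 0 ≤ s → 1 / f s = 1 + ξ s) :
    ∀ s : ℝ, 0 ≤ s → ξ s = (1 / (1 - p)) * ξ ((1 - p) * s) := by
  obtain ⟨hp0, hp1⟩ := hp
  subst hq
  intro s hs
  have hs' : 0 ≤ (1 - p) * s := mul_nonneg (by linarith) hs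
  have hrec : (f ((1 - p) * s))⁻¹ = (1 - p) * (f s)⁻¹ + p := by
    refine inv_eq_of_mul_add_mul_sub_mul_eq hp0.ne' (hrange s hs).1.ne' (hrange _ hs').1.ne' ?_
    simpa only [sub_sub_cancel] using heq s hs
  have hξs := hξ s hs
  have hξs' := hξ _ hs'
  rw [one_div] at hξs hξs'
  have h1p : 1 - p ≠ 0 := by linarith
  field_simp
  linear_combination hξs' - hrec - (1 - p) * hξs

theorem stmt_11 (p q : ℝ) (hp : p ∈ Set.Ioo (0:ℝ) 1) (hq : q = 1 - p)
    (f : ℝ → ℝ) (hcont : ContinuousOn f (Set.Ici 0))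
    (hrange : ∀ s : ℝ, 0 ≤ s → f s ∈ Set.Ioc (0:ℝ) 1) (h0 : f 0 = 1)
    (heq : ∀ s : ℝ, 0 ≤ s →
      f ((1 - p) * s) * ((1 - p) + p * f s) * (1 - (1 - q) * f (q * s)) = q * f (q * s))
    (ξ : ℝ → ℝ) (hξ : ∀ s : ℝ, 0 ≤ s → 1 / f s = 1 + ξ s) :
    ∀ s : ℝ, 0 ≤ s → ξ s = (1 / (1 - p)) * ξ ((1 - p) * s) :=
  stmt_11_general p q hp hq f hrange heq ξ hξ
end

section
/- Let p, q ∈ (0,1) with q^{k-1} ≠ p + (1-p)ᵏ for all integers k ≥ 2. Suppose f and g are smooth functions on [0,∞) with f(0) = g(0) = 1 and f'(0) = g'(0), both satisfying F((1-p)s)·((1-p) + p·F(s))·(1 - (1-q)·F(qs)) = q·F(qs) for all s ≥ 0 (with F = f, g respectively). Then f⁽ᵏ⁾(0) = g⁽ᵏ⁾(0) for all k ≥ 0. -/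
open Finset

lemma pascal_sum (A B : ℕ → ℝ) (n : ℕ) :
    ∑ i ∈ range (n+1), ((n.choose i : ℝ) * A (i+1) * B (n-i) + (n.choose i : ℝ) * A i * B (n+1-i))
      = ∑ i ∈ range (n+2), (((n+1).choose i : ℝ) * A i * B (n+1-i)) := by
  rw [Finset.sum_add_distrib]
  have h2 : ∑ i ∈ range (n+1), (n.choose i : ℝ) * A i * B (n+1-i)
      = (∑ i ∈ range n, (n.choose (i+1) : ℝ) * A (i+1) * B (n-i)) + A 0 * B (n+1) := by
    rw [Finset.sum_range_succ']
    simp [Nat.succ_sub_succ]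
  have h3 : ∑ i ∈ range n, (n.choose (i+1) : ℝ) * A (i+1) * B (n-i)
      = ∑ i ∈ range (n+1), (n.choose (i+1) : ℝ) * A (i+1) * B (n-i) := by
    rw [Finset.sum_range_succ, Nat.choose_succ_self]
    simp
  rw [h2, h3, Finset.sum_range_succ' (fun i => ((n+1).choose i : ℝ) * A i * B (n+1-i)) (n+1)]
  simp only [Nat.succ_sub_succ, Nat.choose_zero_right, Nat.cast_one, one_mul]
  rw [← add_assoc, ← Finset.sum_add_distrib]
  congr 1
  refine Finset.sum_congr rfl fun i _ => ?_
  rw [Nat.choose_succ_succ, Nat.cast_add]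
  ring

lemma leib {f g : ℝ → ℝ} (hf : ContDiff ℝ (⊤ : ℕ∞) f) (hg : ContDiff ℝ (⊤ : ℕ∞) g) :
    ∀ (n : ℕ) (x : ℝ), iteratedDeriv n (fun y => f y * g y) x
      = ∑ i ∈ range (n+1), (n.choose i : ℝ) * iteratedDeriv i f x * iteratedDeriv (n-i) g x := by
  have hdf : ∀ i : ℕ, Differentiable ℝ (iteratedDeriv i f) :=
    fun i => hf.differentiable_iteratedDeriv i (by exact_mod_cast ENat.coe_lt_top i)
  have hdg : ∀ i : ℕ, Differentiable ℝ (iteratedDeriv i g) :=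
    fun i => hg.differentiable_iteratedDeriv i (by exact_mod_cast ENat.coe_lt_top i)
  intro n
  induction n with
  | zero => intro x; simp
  | succ n ih =>
    intro x
    have hfg : iteratedDeriv n (fun y => f y * g y) = fun y =>
        ∑ i ∈ range (n+1), (n.choose i : ℝ) * iteratedDeriv i f y * iteratedDeriv (n-i) g y :=
      funext ih
    rw [iteratedDeriv_succ, hfg,
      deriv_fun_sum (A := fun i y => (n.choose i : ℝ) * iteratedDeriv i f y * iteratedDeriv (n-i) g y) (fun i _ => (((hdf i).differentiableAt.const_mul _).mul (hdg (n-i)).differentiableAt))]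
    have hterm : ∀ i ∈ range (n+1),
        deriv (fun y => (n.choose i : ℝ) * iteratedDeriv i f y * iteratedDeriv (n-i) g y) x
        = (n.choose i : ℝ) * iteratedDeriv (i+1) f x * iteratedDeriv (n-i) g x
          + (n.choose i : ℝ) * iteratedDeriv i f x * iteratedDeriv (n+1-i) g x := by
      intro i hi
      have hle : i ≤ n := Finset.mem_range_succ_iff.mp hi
      rw [deriv_fun_mul ((hdf i).differentiableAt.const_mul _) (hdg (n-i)).differentiableAt,
        deriv_const_mul _ (hdf i).differentiableAt]
      rw [← iteratedDeriv_succ, ← iteratedDeriv_succ, Nat.sub_add_comm hle]  -- n - i + 1 = n + 1 - i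
      try ring
    rw [Finset.sum_congr rfl hterm, pascal_sum (fun i => iteratedDeriv i f x)
      (fun i => iteratedDeriv i g x) n]

lemma derivs_vanish {h : ℝ → ℝ} (hh : ContDiff ℝ (⊤ : ℕ∞) h) (h0 : ∀ s ∈ Set.Ici (0:ℝ), h s = 0) :
    ∀ n, ∀ s ∈ Set.Ici (0:ℝ), iteratedDeriv n h s = 0 := by
  intro n
  induction n with
  | zero => simpa using h0
  | succ n ih =>
    intro s hs
    rw [iteratedDeriv_succ]
    have hdiff : DifferentiableAt ℝ (iteratedDeriv n h) s :=
      (hh.differentiable_iteratedDeriv n (by exact_mod_cast ENat.coe_lt_top n)).differentiableAt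
    have h1 : HasDerivWithinAt (iteratedDeriv n h) (deriv (iteratedDeriv n h) s) (Set.Ici 0) s :=
      hdiff.hasDerivAt.hasDerivWithinAt
    have h2 : HasDerivWithinAt (iteratedDeriv n h) 0 (Set.Ici 0) s :=
      (hasDerivWithinAt_const s _ (0:ℝ)).congr ih (ih s hs)
    have hu := uniqueDiffOn_Ici (0:ℝ) s hs
    rw [← h1.derivWithin hu, h2.derivWithin hu]

lemma iter_sub {F G : ℝ → ℝ} (hF : ContDiff ℝ (⊤ : ℕ∞) F) (hG : ContDiff ℝ (⊤ : ℕ∞) G) (n : ℕ) (x : ℝ) :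
    iteratedDeriv n (fun s => F s - G s) x = iteratedDeriv n F x - iteratedDeriv n G x := by
  rw [← iteratedDerivWithin_univ, ← iteratedDerivWithin_univ, ← iteratedDerivWithin_univ]
  exact iteratedDerivWithin_sub (Set.mem_univ x) uniqueDiffOn_univ
    ((hF.of_le (by exact_mod_cast le_top) : ContDiff ℝ n F).contDiffWithinAt) ((hG.of_le (by exact_mod_cast le_top) : ContDiff ℝ n G).contDiffWithinAt)

lemma iter_cmul {F : ℝ → ℝ} (hF : ContDiff ℝ (⊤ : ℕ∞) F) (c : ℝ) (n : ℕ) (x : ℝ) :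
    iteratedDeriv n (fun s => c * F s) x = c * iteratedDeriv n F x := by
  rw [← iteratedDerivWithin_univ, ← iteratedDerivWithin_univ]
  exact iteratedDerivWithin_const_mul (Set.mem_univ x) uniqueDiffOn_univ c
    ((hF.of_le (by exact_mod_cast le_top) : ContDiff ℝ n F).contDiffWithinAt)

lemma iter_cadd {F : ℝ → ℝ} (c : ℝ) (n : ℕ) (hn : 0 < n) (x : ℝ) :
    iteratedDeriv n (fun s => c + F s) x = iteratedDeriv n F x := by
  rw [← iteratedDerivWithin_univ, ← iteratedDerivWithin_univ]
  exact iteratedDerivWithin_const_add hn c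

lemma iter_scale {F : ℝ → ℝ} (hF : ContDiff ℝ (⊤ : ℕ∞) F) (c : ℝ) (n : ℕ) :
    iteratedDeriv n (fun s => F (c * s)) 0 = c ^ n * iteratedDeriv n F 0 := by
  rw [iteratedDeriv_comp_const_mul (hF.of_le (by exact_mod_cast le_top) : ContDiff ℝ n F) c]
  norm_num

lemma key (p q : ℝ) (f : ℝ → ℝ) (hf : ContDiff ℝ (⊤ : ℕ∞) f) (hf0 : f 0 = 1)
    (heqf : ∀ s : ℝ, 0 ≤ s →
      f ((1 - p) * s) * ((1 - p) + p * f s) * (1 - (1 - q) * f (q * s)) = q * f (q * s)) (k : ℕ) :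
    ∑ i ∈ range (k+1), (k.choose i : ℝ) *
        (∑ j ∈ range (i+1), (i.choose j : ℝ) * ((1-p)^j * iteratedDeriv j f 0) *
          (if i - j = 0 then 1 else p * iteratedDeriv (i-j) f 0)) *
        (if k - i = 0 then q else -((1-q) * q^(k-i) * iteratedDeriv (k-i) f 0))
      = q^(k+1) * iteratedDeriv k f 0 := by
  have hA : ContDiff ℝ (⊤ : ℕ∞) (fun s : ℝ => f ((1-p)*s)) := hf.comp (contDiff_const.mul contDiff_id)
  have hq' : ContDiff ℝ (⊤ : ℕ∞) (fun s : ℝ => f (q*s)) := hf.comp (contDiff_const.mul contDiff_id)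
  have hB : ContDiff ℝ (⊤ : ℕ∞) (fun s : ℝ => (1-p) + p * f s) := contDiff_const.add (contDiff_const.mul hf)
  have hC : ContDiff ℝ (⊤ : ℕ∞) (fun s : ℝ => 1 - (1-q) * f (q*s)) :=
    contDiff_const.sub (contDiff_const.mul hq')
  have hR : ContDiff ℝ (⊤ : ℕ∞) (fun s : ℝ => q * f (q*s)) := contDiff_const.mul hq'
  have hAB : ContDiff ℝ (⊤ : ℕ∞) (fun s : ℝ => f ((1-p)*s) * ((1-p) + p * f s)) := hA.mul hB
  have hABC : ContDiff ℝ (⊤ : ℕ∞) (fun s : ℝ => f ((1-p)*s) * ((1-p) + p * f s) * (1-(1-q)*f (q*s))) :=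
    hAB.mul hC
  have hPhi : ContDiff ℝ (⊤ : ℕ∞) (fun s : ℝ =>
      f ((1-p)*s) * ((1-p) + p * f s) * (1-(1-q)*f (q*s)) - q * f (q*s)) := hABC.sub hR
  have hvan := derivs_vanish hPhi (fun s hs => by rw [sub_eq_zero]; exact heqf s hs) k 0 Set.self_mem_Ici
  rw [iter_sub hABC hR] at hvan
  have hAval : ∀ j, iteratedDeriv j (fun s : ℝ => f ((1-p)*s)) 0
      = (1-p)^j * iteratedDeriv j f 0 := fun j => iter_scale hf (1-p) j
  have hBval : ∀ m, iteratedDeriv m (fun s : ℝ => (1-p) + p * f s) 0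
      = if m = 0 then 1 else p * iteratedDeriv m f 0 := by
    intro m
    cases m with
    | zero => simp [hf0]
    | succ m => rw [if_neg (Nat.succ_ne_zero m), iter_cadd _ _ (Nat.succ_pos m), iter_cmul hf]
  have hCval : ∀ m, iteratedDeriv m (fun s : ℝ => 1 - (1-q) * f (q*s)) 0
      = if m = 0 then q else -((1-q) * q^m * iteratedDeriv m f 0) := by
    intro m
    cases m with
    | zero => simp [hf0]
    | succ m =>
      rw [if_neg (Nat.succ_ne_zero m)]
      have heq : (fun s : ℝ => 1 - (1-q) * f (q*s)) = fun s : ℝ => 1 + (-(1-q)) * f (q*s) := by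
        funext s; ring
      rw [heq, iter_cadd _ _ (Nat.succ_pos m)]
      have h1 := iter_cmul hq' (-(1-q)) (m+1) 0
      beta_reduce at h1
      rw [h1, iter_scale hf q]
      ring
  have hRval : iteratedDeriv k (fun s : ℝ => q * f (q*s)) 0 = q^(k+1) * iteratedDeriv k f 0 := by
    have h1 := iter_cmul hq' q k 0
    beta_reduce at h1
    rw [h1, iter_scale hf q]
    ring
  have hval : iteratedDeriv k
      (fun s : ℝ => f ((1-p)*s) * ((1-p) + p * f s) * (1-(1-q)*f (q*s))) 0
      = ∑ i ∈ range (k+1), (k.choose i : ℝ) *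
        (∑ j ∈ range (i+1), (i.choose j : ℝ) * ((1-p)^j * iteratedDeriv j f 0) *
          (if i - j = 0 then 1 else p * iteratedDeriv (i-j) f 0)) *
        (if k - i = 0 then q else -((1-q) * q^(k-i) * iteratedDeriv (k-i) f 0)) := by
    have h1 := leib hAB hC k 0
    beta_reduce at h1
    rw [h1]
    refine Finset.sum_congr rfl fun i _ => ?_
    have h2 := leib hA hB i 0
    beta_reduce at h2
    rw [h2, hCval (k-i)]
    congr 2
    refine Finset.sum_congr rfl fun j _ => ?_
    rw [hAval j, hBval (i-j)]
  rw [← hRval, ← hval]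
  linarith [hvan]

lemma alg {p q : ℝ} (hq0 : 0 < q) {m : ℕ}
    (hco : q ^ (m + 1) ≠ p + (1 - p) ^ (m + 2))
    (u v : ℕ → ℝ) (hu0 : u 0 = 1) (hv0 : v 0 = 1) (hlow : ∀ i, i < m + 2 → u i = v i)
    (hu : ∑ i ∈ range (m + 2 + 1), ((m+2).choose i : ℝ) *
        (∑ j ∈ range (i+1), (i.choose j : ℝ) * ((1-p)^j * u j) *
          (if i - j = 0 then 1 else p * u (i-j))) *
        (if (m+2) - i = 0 then q else -((1-q) * q^((m+2)-i) * u ((m+2)-i)))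
      = q^(m + 2 + 1) * u (m+2))
    (hv : ∑ i ∈ range (m + 2 + 1), ((m+2).choose i : ℝ) *
        (∑ j ∈ range (i+1), (i.choose j : ℝ) * ((1-p)^j * v j) *
          (if i - j = 0 then 1 else p * v (i-j))) *
        (if (m+2) - i = 0 then q else -((1-q) * q^((m+2)-i) * v ((m+2)-i)))
      = q^(m + 2 + 1) * v (m+2)) :
    u (m+2) = v (m+2) := by
  -- inner sums with small index agree
  have hInner : ∀ i, i < m + 2 →
      (∑ j ∈ range (i+1), (i.choose j : ℝ) * ((1-p)^j * u j) *
        (if i - j = 0 then 1 else p * u (i-j)))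
      = (∑ j ∈ range (i+1), (i.choose j : ℝ) * ((1-p)^j * v j) *
        (if i - j = 0 then 1 else p * v (i-j))) := by
    intro i hi
    refine Finset.sum_congr rfl fun j hj => ?_
    have hj' : j < i + 1 := Finset.mem_range.mp hj
    rw [hlow j (by omega)]
    by_cases h0 : i - j = 0
    · simp [h0]
    · rw [if_neg h0, if_neg h0, hlow (i-j) (by omega)]
  -- expansion of inner sum at top index
  have expandInner : ∀ w : ℕ → ℝ, w 0 = 1 →
      (∑ j ∈ range (m + 2 + 1), ((m+2).choose j : ℝ) * ((1-p)^j * w j) *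
        (if (m+2) - j = 0 then 1 else p * w ((m+2)-j)))
      = (∑ j ∈ range (m+1), ((m+2).choose (j+1) : ℝ) * ((1-p)^(j+1) * w (j+1)) *
          (if (m+2) - (j+1) = 0 then 1 else p * w ((m+2)-(j+1))))
        + p * w (m+2) + (1-p)^(m+2) * w (m+2) := by
    intro w hw0
    rw [Finset.sum_range_succ, Finset.sum_range_succ']
    simp [hw0]
    try ring
  have hmidI : (∑ j ∈ range (m+1), ((m+2).choose (j+1) : ℝ) * ((1-p)^(j+1) * u (j+1)) *
          (if (m+2) - (j+1) = 0 then 1 else p * u ((m+2)-(j+1))))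
      = (∑ j ∈ range (m+1), ((m+2).choose (j+1) : ℝ) * ((1-p)^(j+1) * v (j+1)) *
          (if (m+2) - (j+1) = 0 then 1 else p * v ((m+2)-(j+1)))) := by
    refine Finset.sum_congr rfl fun j hj => ?_
    have hj' : j < m + 1 := Finset.mem_range.mp hj
    rw [hlow (j+1) (by omega)]
    by_cases h0 : (m+2) - (j+1) = 0
    · simp [h0]
    · rw [if_neg h0, if_neg h0, hlow ((m+2)-(j+1)) (by omega)]
  -- expansion of outer sum
  have expandOuter : ∀ w : ℕ → ℝ, w 0 = 1 →
      (∑ i ∈ range (m + 2 + 1), ((m+2).choose i : ℝ) *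
        (∑ j ∈ range (i+1), (i.choose j : ℝ) * ((1-p)^j * w j) *
          (if i - j = 0 then 1 else p * w (i-j))) *
        (if (m+2) - i = 0 then q else -((1-q) * q^((m+2)-i) * w ((m+2)-i))))
      = (∑ i ∈ range (m+1), ((m+2).choose (i+1) : ℝ) *
          (∑ j ∈ range (i+1+1), ((i+1).choose j : ℝ) * ((1-p)^j * w j) *
            (if (i+1) - j = 0 then 1 else p * w ((i+1)-j))) *
          (if (m+2) - (i+1) = 0 then q else -((1-q) * q^((m+2)-(i+1)) * w ((m+2)-(i+1)))))
        + (-((1-q) * q^(m+2) * w (m+2)))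
        + q * (∑ j ∈ range (m + 2 + 1), ((m+2).choose j : ℝ) * ((1-p)^j * w j) *
            (if (m+2) - j = 0 then 1 else p * w ((m+2)-j))) := by
    intro w hw0
    rw [Finset.sum_range_succ, Finset.sum_range_succ']
    simp [hw0]
    try ring
  have hmidO : (∑ i ∈ range (m+1), ((m+2).choose (i+1) : ℝ) *
          (∑ j ∈ range (i+1+1), ((i+1).choose j : ℝ) * ((1-p)^j * u j) *
            (if (i+1) - j = 0 then 1 else p * u ((i+1)-j))) *
          (if (m+2) - (i+1) = 0 then q else -((1-q) * q^((m+2)-(i+1)) * u ((m+2)-(i+1)))))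
      = (∑ i ∈ range (m+1), ((m+2).choose (i+1) : ℝ) *
          (∑ j ∈ range (i+1+1), ((i+1).choose j : ℝ) * ((1-p)^j * v j) *
            (if (i+1) - j = 0 then 1 else p * v ((i+1)-j))) *
          (if (m+2) - (i+1) = 0 then q else -((1-q) * q^((m+2)-(i+1)) * v ((m+2)-(i+1))))) := by
    refine Finset.sum_congr rfl fun i hi => ?_
    have hi' : i < m + 1 := Finset.mem_range.mp hi
    rw [hInner (i+1) (by omega)]
    by_cases h0 : (m+2) - (i+1) = 0
    · simp [h0]
    · rw [if_neg h0, if_neg h0, hlow ((m+2)-(i+1)) (by omega)]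
  rw [expandOuter u hu0, expandInner u hu0, hmidO, hmidI] at hu
  rw [expandOuter v hv0, expandInner v hv0] at hv
  have hcoef : q * ((1-p)^(m+2) + p) - q^(m+2) ≠ 0 := by
    have : q * ((1-p)^(m+2) + p) - q^(m+2) = q * (((1-p)^(m+2) + p) - q^(m+1)) := by
      rw [pow_succ q (m+1)]; ring
    rw [this]
    refine mul_ne_zero hq0.ne' (sub_ne_zero.mpr fun h => hco ?_)
    linarith [h]
  have hkey : (q * ((1-p)^(m+2) + p) - q^(m+2)) * (u (m+2) - v (m+2)) = 0 := by
    rw [pow_succ q (m+2)] at hu hv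
    nlinarith [hu, hv]
  rcases mul_eq_zero.mp hkey with h | h
  · exact absurd h hcoef
  · linarith [h]

theorem stmt_14 (p q : ℝ) (hp : p ∈ Set.Ioo (0:ℝ) 1) (hq : q ∈ Set.Ioo (0:ℝ) 1)
    (hcoef : ∀ k : ℕ, 2 ≤ k → q ^ (k - 1) ≠ p + (1 - p) ^ k)
    (f g : ℝ → ℝ) (hf : ContDiff ℝ (⊤ : ℕ∞) f) (hg : ContDiff ℝ (⊤ : ℕ∞) g)
    (hf0 : f 0 = 1) (hg0 : g 0 = 1) (hderiv : deriv f 0 = deriv g 0)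
    (heqf : ∀ s : ℝ, 0 ≤ s →
      f ((1 - p) * s) * ((1 - p) + p * f s) * (1 - (1 - q) * f (q * s)) = q * f (q * s))
    (heqg : ∀ s : ℝ, 0 ≤ s →
      g ((1 - p) * s) * ((1 - p) + p * g s) * (1 - (1 - q) * g (q * s)) = q * g (q * s)) :
    ∀ k : ℕ, iteratedDeriv k f 0 = iteratedDeriv k g 0 := by
  intro k
  induction k using Nat.strong_induction_on with
  | _ k IH =>
    match k with
    | 0 => simp only [iteratedDeriv_zero, hf0, hg0]
    | 1 => simp only [iteratedDeriv_one, hderiv]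
    | (m+2) =>
      have hco : q ^ (m + 1) ≠ p + (1 - p) ^ (m + 2) := by
        have h := hcoef (m+2) (by omega)
        have h21 : m + 2 - 1 = m + 1 := by omega
        rwa [h21] at h
      exact alg hq.1 hco (fun i => iteratedDeriv i f 0) (fun i => iteratedDeriv i g 0)
        (by show iteratedDeriv 0 f 0 = 1; rw [iteratedDeriv_zero]; exact hf0)
        (by show iteratedDeriv 0 g 0 = 1; rw [iteratedDeriv_zero]; exact hg0)
        (fun i hi => IH i hi)
        (key p q f hf hf0 heqf (m+2)) (key p q g hg hg0 heqg (m+2))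
end

section
/- Let p ∈ (0,1), λ > 0, and suppose φ: [0,∞) → ℝ is smooth with φ(0) = 1 and satisfies φ'((1-p)t)·(p + (1-p)·φ(t)) = λ·φ((1-p)t) for all t ≥ 0. Then φ'(0) = λ and φ⁽ᵐ⁾(0) = 0 for all integers m ≥ 2. -/
open Finset
theorem my_leibniz (f g : ℝ → ℝ) (hf : ContDiff ℝ (⊤:ℕ∞) f) (hg : ContDiff ℝ (⊤:ℕ∞) g) (n : ℕ) :
    iteratedDeriv n (fun x => f x * g x) = fun x =>
      ∑ k ∈ range (n+1), (n.choose k : ℝ) * (iteratedDeriv k f x * iteratedDeriv (n-k) g x) := by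
  have hlt : ∀ m : ℕ, (m : WithTop ℕ∞) < ((⊤:ℕ∞) : WithTop ℕ∞) :=
    fun m => by exact_mod_cast lt_of_lt_of_le (WithTop.coe_lt_top m) le_top
  have hdf : ∀ m : ℕ, Differentiable ℝ (iteratedDeriv m f) := fun m =>
    hf.differentiable_iteratedDeriv m (hlt m)
  have hdg : ∀ m : ℕ, Differentiable ℝ (iteratedDeriv m g) := fun m =>
    hg.differentiable_iteratedDeriv m (hlt m)
  induction n with
  | zero => simp
  | succ n ih =>
    funext x
    rw [iteratedDeriv_succ, ih]
    have hD : ∀ k ∈ range (n+1), DifferentiableAt ℝ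
        (fun x => (n.choose k : ℝ) * (iteratedDeriv k f x * iteratedDeriv (n-k) g x)) x :=
      fun k _ => (((hdf k).differentiableAt.mul (hdg (n-k)).differentiableAt)).const_mul _
    rw [deriv_fun_sum hD]
    have hterm : ∀ k ∈ range (n+1),
        deriv (fun x => (n.choose k : ℝ) * (iteratedDeriv k f x * iteratedDeriv (n-k) g x)) x
        = (n.choose k : ℝ) * (iteratedDeriv (k+1) f x * iteratedDeriv (n-k) g x
            + iteratedDeriv k f x * iteratedDeriv (n-k+1) g x) := by
      intro k _
      rw [deriv_const_mul _ ((hdf k).differentiableAt.fun_mul (hdg (n-k)).differentiableAt),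
        deriv_fun_mul (hdf k).differentiableAt (hdg (n-k)).differentiableAt,
        ← iteratedDeriv_succ, ← iteratedDeriv_succ]
    rw [Finset.sum_congr rfl hterm]
    -- now pure algebra with sums
    have key : ∑ k ∈ range (n+1), (n.choose k : ℝ) * (iteratedDeriv (k+1) f x * iteratedDeriv (n-k) g x
            + iteratedDeriv k f x * iteratedDeriv (n-k+1) g x)
        = ∑ k ∈ range (n+2), ((n+1).choose k : ℝ) * (iteratedDeriv k f x * iteratedDeriv (n+1-k) g x) := by
      simp only [mul_add, Finset.sum_add_distrib]
      rw [Finset.sum_range_succ' (fun k => ((n+1).choose k : ℝ) * (iteratedDeriv k f x * iteratedDeriv (n+1-k) g x))]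
      have e1 : ∀ k ∈ range (n+1), ((n+1).choose (k+1) : ℝ) * (iteratedDeriv (k+1) f x * iteratedDeriv (n+1-(k+1)) g x)
          = (n.choose k : ℝ) * (iteratedDeriv (k+1) f x * iteratedDeriv (n-k) g x)
            + (n.choose (k+1) : ℝ) * (iteratedDeriv (k+1) f x * iteratedDeriv (n-k) g x) := by
        intro k _
        have : (n+1).choose (k+1) = n.choose k + n.choose (k+1) := Nat.choose_succ_succ n k
        rw [Nat.succ_sub_succ, this]
        push_cast; ring
      rw [Finset.sum_congr rfl e1, Finset.sum_add_distrib]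
      have e2 : ∑ k ∈ range (n+1), (n.choose k : ℝ) * (iteratedDeriv k f x * iteratedDeriv (n-k+1) g x)
          = ∑ k ∈ range (n+1), (n.choose (k+1) : ℝ) * (iteratedDeriv (k+1) f x * iteratedDeriv (n-k) g x)
            + ((n+1).choose 0 : ℝ) * (iteratedDeriv 0 f x * iteratedDeriv (n+1-0) g x) := by
        have h3 : ∀ k ∈ range (n+1), (n.choose k : ℝ) * (iteratedDeriv k f x * iteratedDeriv (n-k+1) g x)
            = (n.choose k : ℝ) * (iteratedDeriv k f x * iteratedDeriv (n+1-k) g x) := by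
          intro k hk
          have hnk : n-k+1 = n+1-k := by
            have := Finset.mem_range.mp hk; omega
          rw [hnk]
        rw [Finset.sum_congr rfl h3,
          Finset.sum_range_succ' (fun k => (n.choose k : ℝ) * (iteratedDeriv k f x * iteratedDeriv (n+1-k) g x))]
        simp only [Nat.choose_zero_right, Nat.sub_zero, Nat.cast_one]
        rw [Finset.sum_range_succ (fun k => (n.choose (k+1) : ℝ) * (iteratedDeriv (k+1) f x * iteratedDeriv (n-k) g x))]
        simp [Nat.choose_succ_self]
      rw [e2]; ring
    rw [key]

theorem iter_zero_fun (n : ℕ) (t : ℝ) : iteratedDeriv n (fun _ : ℝ => (0:ℝ)) t = 0 := by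
  induction n generalizing t with
  | zero => simp
  | succ n ih =>
    rw [iteratedDeriv_succ]
    have : iteratedDeriv n (fun _ : ℝ => (0:ℝ)) = fun _ => 0 := funext fun s => ih s
    rw [this]
    simp

theorem stmt_16 (p lam : ℝ) (hp : p ∈ Set.Ioo (0:ℝ) 1) (hlam : 0 < lam)
    (φ : ℝ → ℝ) (hsmooth : ContDiff ℝ (⊤ : ℕ∞) φ) (h0 : φ 0 = 1)
    (heq : ∀ t : ℝ, 0 ≤ t →
      deriv φ ((1 - p) * t) * (p + (1 - p) * φ t) = lam * φ ((1 - p) * t)) :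
    deriv φ 0 = lam ∧ ∀ m : ℕ, 2 ≤ m → iteratedDeriv m φ 0 = 0 := by
  obtain ⟨hp0, hp1⟩ := hp
  set q : ℝ := 1 - p with hqdef
  have hq0 : 0 < q := by simp [hqdef]; linarith
  have hqne : q ≠ 0 := ne_of_gt hq0
  have hφ : ContDiff ℝ (⊤:ℕ∞) φ := hsmooth.of_le (by simp)
  have hdφ : ContDiff ℝ (⊤:ℕ∞) (deriv φ) := (contDiff_infty_iff_deriv.mp hφ).2
  have hmulq : ContDiff ℝ (⊤:ℕ∞) (fun t : ℝ => q * t) := contDiff_const.mul contDiff_id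
  have hψ : ContDiff ℝ (⊤:ℕ∞) (fun t : ℝ => deriv φ (q * t)) := hdφ.comp hmulq
  have hg : ContDiff ℝ (⊤:ℕ∞) (fun t : ℝ => p + q * φ t) :=
    contDiff_const.add (contDiff_const.mul hφ)
  have hφq : ContDiff ℝ (⊤:ℕ∞) (fun t : ℝ => φ (q * t)) := hφ.comp hmulq
  set F : ℝ → ℝ := fun t => deriv φ (q * t) * (p + q * φ t) - lam * φ (q * t) with hFdef
  have hF : ContDiff ℝ (⊤:ℕ∞) F := (hψ.mul hg).sub (contDiff_const.mul hφq)
  have hF0 : ∀ t : ℝ, 0 ≤ t → F t = 0 := by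
    intro t ht
    have := heq t ht
    simp only [hFdef, hqdef]
    rw [sub_eq_zero]
    exact this
  -- all iterated derivatives of F vanish at 0
  have hFn : ∀ n : ℕ, iteratedDeriv n F 0 = 0 := by
    intro n
    have hpos : ∀ t : ℝ, 0 < t → iteratedDeriv n F t = 0 := by
      intro t ht
      have hev : F =ᶠ[nhds t] (fun _ => (0:ℝ)) := by
        filter_upwards [Ioi_mem_nhds ht] with s hs
        exact hF0 s (le_of_lt hs)
      rw [hev.iteratedDeriv_eq n]
      exact iter_zero_fun n t
    have hcont : Continuous (iteratedDeriv n F) := hF.continuous_iteratedDeriv n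
      (by exact_mod_cast le_top)
    have h1 : Filter.Tendsto (iteratedDeriv n F) (nhdsWithin 0 (Set.Ioi 0))
        (nhds (iteratedDeriv n F 0)) := (hcont.continuousAt).continuousWithinAt
    have h2 : Filter.Tendsto (iteratedDeriv n F) (nhdsWithin 0 (Set.Ioi 0)) (nhds 0) := by
      refine Filter.Tendsto.congr' ?_ tendsto_const_nhds
      filter_upwards [self_mem_nhdsWithin] with t ht
      exact (hpos t ht).symm
    exact tendsto_nhds_unique h1 h2
  set a : ℕ → ℝ := fun n => iteratedDeriv n φ 0 with hadef
  have ha0 : a 0 = 1 := by simp [hadef, h0]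
  -- derivatives of ψ at 0
  have hψk : ∀ k : ℕ, iteratedDeriv k (fun t : ℝ => deriv φ (q * t)) 0 = q^k * a (k+1) := by
    intro k
    rw [iteratedDeriv_comp_const_mul (n := k) (hdφ.of_le (by exact_mod_cast le_top)) q]
    simp [← iteratedDeriv_succ', hadef]
  -- derivatives of g at 0
  have hgk : ∀ j : ℕ, 1 ≤ j → iteratedDeriv j (fun t : ℝ => p + q * φ t) 0 = q * a j := by
    intro j hj
    rw [← iteratedDerivWithin_univ]
    rw [iteratedDerivWithin_const_add hj p]
    rw [iteratedDerivWithin_const_mul (n := j) (Set.mem_univ (0:ℝ)) uniqueDiffOn_univ q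
      (hφ.contDiffOn.of_le (by exact_mod_cast le_top) _ (Set.mem_univ _))]
    rw [iteratedDerivWithin_univ]
  have hg0 : iteratedDeriv 0 (fun t : ℝ => p + q * φ t) 0 = 1 := by
    simp [h0, hqdef]
  -- derivative of the RHS at 0
  have hrhs : ∀ n : ℕ, iteratedDeriv n (fun t : ℝ => lam * φ (q * t)) 0 = lam * (q^n * a n) := by
    intro n
    rw [← iteratedDerivWithin_univ]
    rw [iteratedDerivWithin_const_mul (n := n) (Set.mem_univ (0:ℝ)) uniqueDiffOn_univ lam
      (hφq.contDiffOn.of_le (by exact_mod_cast le_top) _ (Set.mem_univ _))]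
    rw [iteratedDerivWithin_univ]
    rw [iteratedDeriv_comp_const_mul (n := n) (hφ.of_le (by exact_mod_cast le_top)) q]
    simp [hadef]
  -- main equation for each n
  have hE : ∀ n : ℕ,
      (∑ k ∈ range (n+1), (n.choose k : ℝ) *
        ((q^k * a (k+1)) * iteratedDeriv (n-k) (fun t : ℝ => p + q * φ t) 0))
      = lam * (q^n * a n) := by
    intro n
    have hsplit : iteratedDeriv n F 0 =
        iteratedDeriv n (fun t : ℝ => deriv φ (q * t) * (p + q * φ t)) 0
          - iteratedDeriv n (fun t : ℝ => lam * φ (q * t)) 0 := by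
      rw [← iteratedDerivWithin_univ, ← iteratedDerivWithin_univ, ← iteratedDerivWithin_univ]
      exact iteratedDerivWithin_sub (Set.mem_univ (0:ℝ)) uniqueDiffOn_univ
        ((hψ.mul hg).contDiffOn.of_le (by exact_mod_cast le_top) _ (Set.mem_univ _))
        ((contDiff_const.mul hφq).contDiffOn.of_le (by exact_mod_cast le_top) _ (Set.mem_univ _))
    have hlhs : iteratedDeriv n (fun t : ℝ => deriv φ (q * t) * (p + q * φ t)) 0 =
        ∑ k ∈ range (n+1), (n.choose k : ℝ) *
          ((q^k * a (k+1)) * iteratedDeriv (n-k) (fun t : ℝ => p + q * φ t) 0) := by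
      rw [my_leibniz _ _ hψ hg n]
      refine Finset.sum_congr rfl fun k _ => ?_
      rw [hψk k]
    have := hFn n
    rw [hsplit, hlhs, hrhs n, sub_eq_zero] at this
    exact this
  -- n = 0 gives deriv φ 0 = lam
  have ha1 : a 1 = lam := by
    have := hE 0
    simp [hg0, ha0] at this
    exact this
  have hd1 : deriv φ 0 = lam := by
    rw [← ha1, hadef]
    simp [iteratedDeriv_one]
  refine ⟨hd1, ?_⟩
  -- strong induction: a (n+1) = 0 for n ≥ 1
  have key : ∀ n : ℕ, 1 ≤ n → a (n+1) = 0 := by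
    intro n
    induction n using Nat.strong_induction_on with
    | _ n ih =>
      intro hn
      have hEn := hE n
      rw [Finset.sum_range_succ] at hEn
      have hlast : (n.choose n : ℝ) *
          ((q^n * a (n+1)) * iteratedDeriv (n-n) (fun t : ℝ => p + q * φ t) 0)
          = q^n * a (n+1) := by
        simp [Nat.choose_self, hg0]
      have hrest : ∑ k ∈ range n, (n.choose k : ℝ) *
          ((q^k * a (k+1)) * iteratedDeriv (n-k) (fun t : ℝ => p + q * φ t) 0)
          = lam * (q * a n) := by
        rw [Finset.sum_eq_single_of_mem 0 (Finset.mem_range.mpr hn)]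
        · simp only [Nat.sub_zero, Nat.choose_zero_right, Nat.cast_one, pow_zero, one_mul,
            zero_add, hgk n hn, ha1]
        · intro k hk hk0
          have hk1 : 1 ≤ k := by omega
          have hkn : k < n := Finset.mem_range.mp hk
          rw [ih k hkn hk1]
          ring
      rw [hrest, hlast] at hEn
      -- hEn : lam * (q * a n) + q^n * a (n+1) = lam * (q^n * a n)
      rcases eq_or_lt_of_le hn with h1 | h2
      · -- n = 1
        have hn1 : n = 1 := h1.symm
        subst hn1
        rw [ha1] at hEn
        have : q * a 2 = 0 := by nlinarith [hEn]
        have := mul_eq_zero.mp this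
        rcases this with h | h
        · exact absurd h hqne
        · exact h
      · -- n ≥ 2
        have han : a n = 0 := by
          have : n - 1 + 1 = n := by omega
          rw [← this]
          exact ih (n-1) (by omega) (by omega)
        rw [han] at hEn
        simp only [mul_zero, zero_add, add_zero] at hEn
        exact (mul_eq_zero.mp hEn).resolve_left (pow_ne_zero n hqne)
  intro m hm
  have : m - 1 + 1 = m := by omega
  rw [← this]
  exact key (m-1) (by omega)
end

section
/- Suppose f: [0,∞) → (0,1] is differentiable with f(0) = 1, f'(0) = -μ for some μ > 0, and for every p ∈ (0,1) the function ψ_p(t) := f((1-p)t)·(1 - p + p·f(t)) is independent of p, i.e. ψ_p(t) = ψ_{p'}(t) for all p, p' ∈ (0,1) and t ≥ 0. Then f(t) = 1/(1 + μt) for all t ≥ 0. -/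
/-!
Write `ψ_p(t) = f((1-p)t)(1 - p + p f(t))`. As a function of `p` it is differentiable, constant
on `(0,1)`, and equal to `f(0) f(t) = f(t)` at `p = 1`; so its derivative at `p = 1`, namely
`μ t f(t) + f(t) - 1`, vanishes, i.e. `f(t) (1 + μ t) = 1`.
-/

open Set

/-- Since `b` lies in the closure of `(a, b)`, a derivative there is determined by the values
on `(a, b)`. -/
theorem HasDerivAt.eq_zero_of_eqOn_Ioo {F : Type*} [NormedAddCommGroup F] [NormedSpace ℝ F]
    {g : ℝ → F} {g' c : F} {a b : ℝ} (hg : HasDerivAt g g' b) (hab : a < b)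
    (hconst : EqOn g (fun _ => c) (Ioo a b)) : g' = 0 := by
  have hb : b ∈ closure (Ioo a b) := by
    rw [closure_Ioo hab.ne]
    exact right_mem_Icc.2 hab.le
  have hgb : g b = c := by
    have himage : g '' Ioo a b ⊆ {c} := image_subset_iff.2 fun x hx => hconst hx
    simpa using closure_mono himage (hg.continuousAt.continuousWithinAt.mem_closure_image hb)
  exact (uniqueDiffWithinAt_convex (convex_Ioo a b) (by simpa using hab) hb).eq_deriv _
    hg.hasDerivWithinAt ((hasDerivWithinAt_const b _ c).congr hconst hgb)

/-- The paper's `ψ_p(t)`: the Laplace transform of `(1-p)X + ε_p Y` when `f` is that of `X`. -/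
def mixtureLaplace (f : ℝ → ℝ) (p t : ℝ) : ℝ := f ((1 - p) * t) * (1 - p + p * f t)

theorem hasDerivAt_mixtureLaplace_one {f : ℝ → ℝ} {f' : ℝ} (hf : HasDerivAt f f' 0) (t : ℝ) :
    HasDerivAt (fun p => mixtureLaplace f p t) (-f' * t * f t + f 0 * (f t - 1)) 1 := by
  have hscale : HasDerivAt (fun p : ℝ => (1 - p) * t) (-t) 1 := by
    simpa using ((hasDerivAt_id' (1 : ℝ)).const_sub 1).mul_const t
  have hweight : HasDerivAt (fun p : ℝ => 1 - p + p * f t) (f t - 1) 1 := by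
    simpa [sub_eq_neg_add] using
      ((hasDerivAt_id' (1 : ℝ)).const_sub 1).fun_add ((hasDerivAt_id' 1).mul_const (f t))
  have hprod := (HasDerivAt.comp_of_eq 1 hf hscale (by ring)).fun_mul hweight
  simp only [Function.comp_apply, sub_self, zero_mul, zero_add, one_mul] at hprod
  exact hprod.congr_deriv (by ring)

theorem stmt_17_general (μ : ℝ)
    (f : ℝ → ℝ) (hdiff : Differentiable ℝ f)
    (h0 : f 0 = 1) (hderiv : deriv f 0 = -μ)
    (hindep : ∀ p p' : ℝ, p ∈ Set.Ioo (0:ℝ) 1 → p' ∈ Set.Ioo (0:ℝ) 1 → ∀ t : ℝ, 0 ≤ t →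
      f ((1 - p) * t) * (1 - p + p * f t) = f ((1 - p') * t) * (1 - p' + p' * f t)) :
    ∀ t : ℝ, 0 ≤ t → f t = 1 / (1 + μ * t) := by
  intro t ht
  have hf : HasDerivAt f (-μ) 0 := hderiv ▸ (hdiff 0).hasDerivAt
  have hconst : EqOn (fun p => mixtureLaplace f p t) (fun _ => mixtureLaplace f (1 / 2) t)
      (Ioo 0 1) := fun p hp => hindep p (1 / 2) hp (by norm_num) t ht
  have hslope := (hasDerivAt_mixtureLaplace_one hf t).eq_zero_of_eqOn_Ioo zero_lt_one hconst
  rw [h0] at hslope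
  exact eq_one_div_of_mul_eq_one_left (by linarith)

theorem stmt_17 (μ : ℝ) (hμ : 0 < μ)
    (f : ℝ → ℝ) (hdiff : Differentiable ℝ f)
    (hrange : ∀ t : ℝ, 0 ≤ t → f t ∈ Set.Ioc (0:ℝ) 1)
    (h0 : f 0 = 1) (hderiv : deriv f 0 = -μ)
    (hindep : ∀ p p' : ℝ, p ∈ Set.Ioo (0:ℝ) 1 → p' ∈ Set.Ioo (0:ℝ) 1 → ∀ t : ℝ, 0 ≤ t →
      f ((1 - p) * t) * (1 - p + p * f t) = f ((1 - p') * t) * (1 - p' + p' * f t)) :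
    ∀ t : ℝ, 0 ≤ t → f t = 1 / (1 + μ * t) :=
  stmt_17_general μ f hdiff h0 hderiv hindep
end

section
/- Let p ∈ (0,1) and λ > 0. If X and Y are independent random variables each exponentially distributed with rate λ, and ε_p is independent of (X, Y) with P(ε_p = 1) = p, P(ε_p = 0) = 1-p, then the random variable (1-p)·X + ε_p·Y is exponentially distributed with rate λ. -/
/-!
Conditioning on `ε`, the law of `(1-p) X + ε Y` is the mixture of the laws of `(1-p) X` and
`(1-p) X + Y` with weights `1-p` and `p`. With `φ t = λ / (λ - i t)` the characteristic function
of `Exp(λ)`, its characteristic function is therefore `φ((1-p) t) (1 - p + p φ t)`, which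
simplifies to `φ t`; characteristic functions determine laws.
-/

open MeasureTheory ProbabilityTheory Complex

lemma charFun_expMeasure {r : ℝ} (hr : 0 < r) (t : ℝ) :
    charFun (expMeasure r) t = r / (r - t * I) := by
  have hre : (-r + t * I).re < 0 := by simpa using hr
  have hdensity : expMeasure r = volume.withDensity (exponentialPDF r) := rfl
  calc charFun (expMeasure r) t
      = ∫ x : ℝ in Set.Ioi 0, (r : ℂ) * cexp ((-r + t * I) * x) := by
        rw [charFun_apply_real, hdensity, integral_withDensity_eq_integral_toReal_smul₀
            (f := exponentialPDF r) (measurable_exponentialPDFReal r).ennreal_ofReal.aemeasurable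
            (.of_forall fun _ => ENNReal.ofReal_lt_top),
          ← integral_Ici_eq_integral_Ioi, ← integral_indicator measurableSet_Ici]
        congr 1 with x
        by_cases hx : 0 ≤ x
        · rw [Set.indicator_of_mem (Set.mem_Ici.mpr hx), exponentialPDF_of_nonneg hx,
            ENNReal.toReal_ofReal (by positivity), Complex.real_smul, ofReal_mul,
            ofReal_exp, mul_assoc, ← Complex.exp_add]
          congr 2
          push_cast
          ring
        · rw [Set.indicator_of_notMem (mt Set.mem_Ici.mp hx),
            exponentialPDF_of_neg (not_le.mp hx)]
          simp
    _ = r / (r - t * I) := by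
        rw [integral_const_mul, integral_exp_mul_complex_Ioi hre, ofReal_zero, mul_zero,
          Complex.exp_zero, show -(r : ℂ) + t * I = -(r - t * I) by ring, div_neg, neg_div,
          neg_neg, mul_one_div]

lemma charFun_smul_add_smul {μ ν : Measure ℝ} [IsFiniteMeasure μ] [IsFiniteMeasure ν]
    {a b : ENNReal} (ha : a ≠ ⊤) (hb : b ≠ ⊤) (t : ℝ) :
    charFun (a • μ + b • ν) t = a.toReal * charFun μ t + b.toReal * charFun ν t := by
  have := μ.smul_finite ha
  have := ν.smul_finite hb
  have hint (ρ : Measure ℝ) [IsFiniteMeasure ρ] :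
      Integrable (fun x : ℝ => cexp (t * x * I)) ρ :=
    (integrable_const (1 : ℝ)).mono (by fun_prop) (by simp [Complex.norm_exp])
  simp only [charFun_apply_real, integral_add_measure (hint _) (hint _), integral_smul_measure,
    Complex.real_smul]

section Bernoulli

variable {Ω : Type*} [MeasurableSpace Ω] {μ : Measure Ω} [IsProbabilityMeasure μ]

lemma map_eq_smul_dirac_zero_add_smul_dirac_one {ε : Ω → ℝ} (hε : Measurable ε) {p : ℝ}
    (hp0 : 0 ≤ p) (hp1 : p ≤ 1) (h1 : μ {ω | ε ω = 1} = ENNReal.ofReal p)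
    (h0 : μ {ω | ε ω = 0} = ENNReal.ofReal (1 - p)) :
    μ.map ε =
      ENNReal.ofReal (1 - p) • Measure.dirac 0 + ENNReal.ofReal p • Measure.dirac 1 := by
  have := Measure.isProbabilityMeasure_map (μ := μ) hε.aemeasurable
  have hsingleton (a : ℝ) : μ.map ε {a} = μ {ω | ε ω = a} :=
    Measure.map_apply hε (measurableSet_singleton a)
  have hdisj : Disjoint ({0} : Set ℝ) {1} := Set.disjoint_singleton.mpr zero_ne_one
  have hmass : μ.map ε ({0} ∪ {1}) = 1 := by
    rw [measure_union hdisj (measurableSet_singleton 1), hsingleton, hsingleton, h0, h1,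
      ← ENNReal.ofReal_add (by linarith) hp0, sub_add_cancel, ENNReal.ofReal_one]
  have hae : ∀ᵐ x ∂μ.map ε, x ∈ ({0} ∪ {1} : Set ℝ) := ae_iff.mpr <|
    (prob_compl_eq_zero_iff ((measurableSet_singleton 0).union (measurableSet_singleton 1))).mpr
      hmass
  rw [← Measure.restrict_eq_self_of_ae_mem hae,
    Measure.restrict_union hdisj (measurableSet_singleton 1), Measure.restrict_singleton,
    Measure.restrict_singleton, hsingleton, hsingleton, h0, h1]

lemma map_mul_add_mul_eq {X Y ε : Ω → ℝ} (hX : Measurable X) (hY : Measurable Y)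
    (hε : Measurable ε) (hXY : IndepFun X Y μ) (hεXY : IndepFun ε (fun ω => (X ω, Y ω)) μ)
    {a b : ENNReal} (hεlaw : μ.map ε = a • Measure.dirac (0 : ℝ) + b • Measure.dirac 1)
    (c : ℝ) :
    μ.map (fun ω => c * X ω + ε ω * Y ω) =
      a • (μ.map X).map (c * ·) + b • ((μ.map X).map (c * ·) ∗ μ.map Y) := by
  have := Measure.isProbabilityMeasure_map (μ := μ) hY.aemeasurable
  have hlaw : μ.map (fun ω => (ε ω, X ω, Y ω)) =
      (a • Measure.dirac (0 : ℝ) + b • Measure.dirac 1).prod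
        ((μ.map X).prod (μ.map Y)) := by
    rw [(indepFun_iff_map_prod_eq_prod_map_map hε.aemeasurable
        (hX.prodMk hY).aemeasurable).mp hεXY, hεlaw,
      (indepFun_iff_map_prod_eq_prod_map_map hX.aemeasurable hY.aemeasurable).mp hXY]
  set g : ℝ × ℝ × ℝ → ℝ := fun z => c * z.2.1 + z.1 * z.2.2 with hg
  have hgm : Measurable g := by fun_prop
  rw [show (fun ω => c * X ω + ε ω * Y ω) = g ∘ fun ω => (ε ω, X ω, Y ω) from rfl,
    ← Measure.map_map hgm (hε.prodMk (hX.prodMk hY)), hlaw, Measure.add_prod,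
    Measure.prod_smul_left, Measure.prod_smul_left, Measure.dirac_prod, Measure.dirac_prod,
    Measure.map_add _ _ hgm, Measure.map_smul, Measure.map_smul,
    Measure.map_map hgm measurable_prodMk_left, Measure.map_map hgm measurable_prodMk_left]
  congr 2
  · rw [show g ∘ Prod.mk 0 = (c * ·) ∘ Prod.fst by ext; simp [hg],
      ← Measure.map_map (by fun_prop) measurable_fst, Measure.map_fst_prod, measure_univ,
      one_smul]
  · rw [show g ∘ Prod.mk 1 = (fun w => w.1 + w.2) ∘ Prod.map (c * ·) id by ext; simp [hg],
      ← Measure.map_map (by fun_prop) (by fun_prop),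
      ← Measure.map_prod_map _ _ (by fun_prop) measurable_id, Measure.map_id]
    rfl

end Bernoulli

theorem stmt_18 {Ω : Type*} [MeasureSpace Ω] [IsProbabilityMeasure (ℙ : Measure Ω)]
    (p lam : ℝ) (hp : p ∈ Set.Ioo (0:ℝ) 1) (hlam : 0 < lam)
    (X Y ε : Ω → ℝ) (hX : Measurable X) (hY : Measurable Y) (hε : Measurable ε)
    (hXlaw : Measure.map X ℙ = expMeasure lam)
    (hYlaw : Measure.map Y ℙ = expMeasure lam)
    (hXY : IndepFun X Y)
    (hεXY : IndepFun ε (fun ω => (X ω, Y ω)))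
    (hε1 : ℙ {ω | ε ω = 1} = ENNReal.ofReal p)
    (hε0 : ℙ {ω | ε ω = 0} = ENNReal.ofReal (1 - p)) :
    Measure.map (fun ω => (1 - p) * X ω + ε ω * Y ω) ℙ = expMeasure lam := by
  have := isProbabilityMeasure_expMeasure hlam
  have := Measure.isProbabilityMeasure_map (μ := ℙ)
    (by fun_prop : AEMeasurable (fun ω => (1 - p) * X ω + ε ω * Y ω))
  refine Measure.ext_of_charFun (funext fun t => ?_)
  rw [map_mul_add_mul_eq hX hY hε hXY hεXY
      (map_eq_smul_dirac_zero_add_smul_dirac_one hε hp.1.le hp.2.le hε1 hε0),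
    hXlaw, hYlaw, charFun_smul_add_smul ENNReal.ofReal_ne_top ENNReal.ofReal_ne_top,
    charFun_conv, charFun_map_mul, charFun_expMeasure hlam, charFun_expMeasure hlam,
    ENNReal.toReal_ofReal (sub_pos.mpr hp.2).le, ENNReal.toReal_ofReal hp.1.le]
  have hne (s : ℝ) : (lam : ℂ) - s * I ≠ 0 := fun h => by
    simpa [hlam.ne'] using congrArg re h
  have hne_t := hne t
  have hne_qt := hne ((1 - p) * t)
  push_cast at hne_qt ⊢
  field_simp
  ring
end
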